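/- Let 0 < q < 1, s ∈ ℝ and n ≥ 1. Then H_n(x,s|q) equals the composition of linear operators (M_x - s q^{n-2} D_q)∘(M_x - s q^{n-3} D_q)∘···∘(M_x - s q^{-1} D_q) applied to the constant polynomial 1, where M_x is multiplication by x, and the j-th factor from the left is M_x - s·q^{n-1-j}·D_q for j = 1,…,n. -/

import Mathlib

/-- The q-number `{n}_q = 1 + q + ⋯ + q^{n-1}`. -/
noncomputable def qNum (q : ℝ) (n : ℕ) : ℝ := ∑ k ∈ Finset.range n, q ^ k

/-- The q-factorial `{n}_q! = Π_{k=1}^n {k}_q`. -/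
noncomputable def qFact (q : ℝ) (n : ℕ) : ℝ := ∏ k ∈ Finset.range n, qNum q (k + 1)

/-- The even q-double factorial `{2k}_q!! = Π_{l=1}^k {2l}_q`. -/
noncomputable def qDoubleFact (q : ℝ) (k : ℕ) : ℝ := ∏ l ∈ Finset.range k, qNum q (2 * (l + 1))

/-- The q-Hermite polynomial `H_n(x,s|q) = Σ_{k=0}^{⌊n/2⌋} (-1)^k q^{k(k-1)}
({n}_q!/({n-2k}_q!·{2k}_q!!)) s^k x^{n-2k}`. -/
noncomputable def qHermite (q s : ℝ) (n : ℕ) : Polynomial ℝ :=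
  ∑ k ∈ Finset.range (n / 2 + 1),
    Polynomial.C ((-1 : ℝ) ^ k * q ^ (k * (k - 1)) *
        (qFact q n / (qFact q (n - 2 * k) * qDoubleFact q k)) * s ^ k) *
      Polynomial.X ^ (n - 2 * k)

/-- The q-derivative on polynomials: it sends `x^j` to `{j}_q x^{j-1}`. -/
noncomputable def qDeriv (q : ℝ) (f : Polynomial ℝ) : Polynomial ℝ :=
  f.sum fun j a => Polynomial.C (a * qNum q j) * Polynomial.X ^ (j - 1)

/-! Writing `{n}_q!/{n-2k}_q!` as the falling q-factorial `{n}_q {n-1}_q ⋯ {n-2k+1}_q`, which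
vanishes for `2k > n`, makes the coefficients of `H_n` uniform in `k`. The recurrence
`H_{n+1} = x H_n - s q^{n-1} D_q H_n` then reduces, monomial by monomial, to the q-number identity
`{n+2}_q = {n-2k}_q + q^{n-2k} {2k+2}_q`, and unfolding it from `H_0 = 1` gives the operator
product. -/

open Polynomial Finset

section QNumbers

variable {q : ℝ}

theorem qNum_zero (q : ℝ) : qNum q 0 = 0 := sum_range_zero _

theorem qNum_add (q : ℝ) (a b : ℕ) : qNum q (a + b) = qNum q a + q ^ a * qNum q b := by
  simp [qNum, sum_range_add, mul_sum, pow_add]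

theorem qNum_succ_pos (hq : 0 ≤ q) (n : ℕ) : 0 < qNum q (n + 1) := by
  rw [qNum, sum_range_succ']
  positivity

theorem qFact_succ (q : ℝ) (n : ℕ) : qFact q (n + 1) = qFact q n * qNum q (n + 1) :=
  prod_range_succ _ _

theorem qFact_pos (hq : 0 ≤ q) (n : ℕ) : 0 < qFact q n :=
  prod_pos fun k _ => qNum_succ_pos hq k

theorem qDoubleFact_succ (q : ℝ) (k : ℕ) :
    qDoubleFact q (k + 1) = qDoubleFact q k * qNum q (2 * k + 2) :=
  prod_range_succ _ _

theorem qDoubleFact_pos (hq : 0 ≤ q) (k : ℕ) : 0 < qDoubleFact q k :=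
  prod_pos fun l _ => qNum_succ_pos hq (2 * l + 1)

noncomputable def qDescFact (q : ℝ) (n m : ℕ) : ℝ := ∏ i ∈ range m, qNum q (n - i)

theorem qDescFact_succ (q : ℝ) (n m : ℕ) :
    qDescFact q n (m + 1) = qDescFact q n m * qNum q (n - m) :=
  prod_range_succ _ _

theorem qDescFact_succ_succ (q : ℝ) (n m : ℕ) :
    qDescFact q (n + 1) (m + 1) = qDescFact q n m * qNum q (n + 1) := by
  simp [qDescFact, prod_range_succ']

theorem qDescFact_eq_zero_of_lt (q : ℝ) {n m : ℕ} (h : n < m) : qDescFact q n m = 0 :=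
  prod_eq_zero (mem_range.2 h) (by rw [Nat.sub_self, qNum_zero])

theorem qFact_eq_mul_qDescFact (q : ℝ) {n m : ℕ} (h : m ≤ n) :
    qFact q n = qFact q (n - m) * qDescFact q n m := by
  induction m with
  | zero => simp [qDescFact]
  | succ m ih =>
    obtain ⟨r, hr⟩ : ∃ r, n - m = r + 1 := ⟨n - m - 1, by omega⟩
    rw [ih (by omega), qDescFact_succ, hr, qFact_succ, show n - (m + 1) = r by omega]
    ring

end QNumbers

section QDeriv

theorem qDeriv_add (q : ℝ) (f g : ℝ[X]) : qDeriv q (f + g) = qDeriv q f + qDeriv q g :=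
  sum_add_index f g _ (fun _ => by simp) fun _ _ _ => by rw [add_mul, C_add, add_mul]

theorem qDeriv_sum (q : ℝ) {ι : Type*} (t : Finset ι) (f : ι → ℝ[X]) :
    qDeriv q (∑ i ∈ t, f i) = ∑ i ∈ t, qDeriv q (f i) :=
  map_sum (AddMonoidHom.mk' (qDeriv q) (qDeriv_add q)) f t

theorem qDeriv_C_mul_X_pow (q a : ℝ) (m : ℕ) :
    qDeriv q (C a * X ^ m) = C (a * qNum q m) * X ^ (m - 1) := by
  rw [C_mul_X_pow_eq_monomial, qDeriv, sum_monomial_index]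
  simp

theorem qDeriv_one (q : ℝ) : qDeriv q 1 = 0 := by
  simpa [qNum_zero] using qDeriv_C_mul_X_pow q 1 0

end QDeriv

section QHermite

noncomputable def qHermiteCoeff (q s : ℝ) (n k : ℕ) : ℝ :=
  (-1) ^ k * q ^ (k * (k - 1)) * (qDescFact q n (2 * k) / qDoubleFact q k) * s ^ k

theorem qHermiteCoeff_zero_right (q s : ℝ) (n : ℕ) : qHermiteCoeff q s n 0 = 1 := by
  simp [qHermiteCoeff, qDescFact, qDoubleFact]

theorem qHermiteCoeff_eq_zero_of_lt (q s : ℝ) {n k : ℕ} (h : n < 2 * k) :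
    qHermiteCoeff q s n k = 0 := by
  simp [qHermiteCoeff, qDescFact_eq_zero_of_lt q h]

theorem qHermite_eq_sum_range {q : ℝ} (s : ℝ) (hq : 0 ≤ q) {n N : ℕ} (hN : n / 2 < N) :
    qHermite q s n = ∑ k ∈ range N, C (qHermiteCoeff q s n k) * X ^ (n - 2 * k) := by
  rw [qHermite, ← sum_subset (range_subset_range.2 hN)]
  · refine sum_congr rfl fun k hk => ?_
    rw [qFact_eq_mul_qDescFact q (m := 2 * k) (by simp at hk; omega),
      mul_div_mul_left _ _ (qFact_pos hq _).ne']
    rfl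
  · intro k _ hk
    rw [qHermiteCoeff_eq_zero_of_lt q s (by simp at hk; omega), C_0, zero_mul]

theorem qHermiteCoeff_succ_succ {q : ℝ} (s : ℝ) (hq : 0 ≤ q) (n k : ℕ) :
    qHermiteCoeff q s (n + 2) (k + 1) =
      qHermiteCoeff q s (n + 1) (k + 1) -
        s * q ^ n * (qHermiteCoeff q s (n + 1) k * qNum q (n + 1 - 2 * k)) := by
  set P := qDescFact q (n + 1) (2 * k + 1)
  have hP2 : qDescFact q (n + 2) (2 * (k + 1)) = P * qNum q (n + 2) := qDescFact_succ_succ q _ _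
  have hP1 : qDescFact q (n + 1) (2 * (k + 1)) = P * qNum q (n - 2 * k) := by
    rw [show 2 * (k + 1) = 2 * k + 1 + 1 by ring, qDescFact_succ,
      show n + 1 - (2 * k + 1) = n - 2 * k by omega]
  have hP0 : qDescFact q (n + 1) (2 * k) * qNum q (n + 1 - 2 * k) = P :=
    (qDescFact_succ q _ _).symm
  have hpow : q ^ ((k + 1) * (k + 1 - 1)) = q ^ (k * (k - 1)) * q ^ (2 * k) := by
    rw [← pow_add]; congr 1; cases k <;> simp; ring
  -- `{n+2} = {n-2k} + q^{n-2k} {2k+2}` when `2k ≤ n`; otherwise `P = 0`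
  have key : P * (q ^ (2 * k) * qNum q (n + 2)) =
      P * (q ^ (2 * k) * qNum q (n - 2 * k) + q ^ n * qNum q (2 * k + 2)) := by
    rcases le_or_gt (2 * k) n with h | h
    · have hqn : q ^ (2 * k) * q ^ (n - 2 * k) = q ^ n := by rw [← pow_add]; congr 1; omega
      rw [show n + 2 = n - 2 * k + (2 * k + 2) by omega, qNum_add]
      linear_combination P * qNum q (2 * k + 2) * hqn
    · rw [show P = 0 from qDescFact_eq_zero_of_lt q (by omega), zero_mul, zero_mul]
  have hD := (qDoubleFact_pos hq k).ne'
  have hN : qNum q (2 * k + 2) ≠ 0 := (qNum_succ_pos hq _).ne'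
  simp only [qHermiteCoeff, hP2, hP1, hpow, qDoubleFact_succ]
  rw [← hP0] at key ⊢
  field_simp
  linear_combination (-1) ^ (k + 1) * q ^ (k * (k - 1)) * s ^ (k + 1) * key

theorem qHermite_monomial_succ_succ {q : ℝ} (s : ℝ) (hq : 0 ≤ q) (n k : ℕ) :
    C (qHermiteCoeff q s (n + 2) (k + 1)) * X ^ (n + 2 - 2 * (k + 1)) =
      X * (C (qHermiteCoeff q s (n + 1) (k + 1)) * X ^ (n + 1 - 2 * (k + 1))) -
        C (s * q ^ n) * (C (qHermiteCoeff q s (n + 1) k * qNum q (n + 1 - 2 * k)) *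
          X ^ (n + 1 - 2 * k - 1)) := by
  have hX : X * (C (qHermiteCoeff q s (n + 1) (k + 1)) * X ^ (n + 1 - 2 * (k + 1))) =
      C (qHermiteCoeff q s (n + 1) (k + 1)) * X ^ (n - 2 * k) := by
    rcases le_or_gt (2 * k + 1) n with h | h
    · rw [mul_left_comm, ← pow_succ', show n + 1 - 2 * (k + 1) + 1 = n - 2 * k by omega]
    · rw [qHermiteCoeff_eq_zero_of_lt q s (by omega), C_0, zero_mul, zero_mul, mul_zero]
  rw [hX, qHermiteCoeff_succ_succ s hq, show n + 2 - 2 * (k + 1) = n - 2 * k by omega,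
    show n + 1 - 2 * k - 1 = n - 2 * k by omega, C_sub, C_mul, C_mul]
  ring

theorem qHermite_succ_succ {q : ℝ} (s : ℝ) (hq : 0 ≤ q) (n : ℕ) :
    qHermite q s (n + 2) =
      X * qHermite q s (n + 1) - C (s * q ^ n) * qDeriv q (qHermite q s (n + 1)) := by
  rw [qHermite_eq_sum_range s hq (N := n + 2) (by omega),
    qHermite_eq_sum_range s hq (n := n + 1) (N := n + 2) (by omega)]
  simp only [qDeriv_sum, qDeriv_C_mul_X_pow, mul_sum]
  conv_lhs => rw [sum_range_succ']
  rw [sum_range_succ' (fun k => X * _), sum_range_succ (fun k => C (s * q ^ n) * _),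
    qHermiteCoeff_eq_zero_of_lt q s (show n + 1 < 2 * (n + 1) by omega),
    sum_congr rfl fun k _ => qHermite_monomial_succ_succ s hq n k, sum_sub_distrib]
  simp only [qHermiteCoeff_zero_right, zero_mul, C_0, mul_zero, add_zero, tsub_zero]
  ring

theorem qHermite_succ {q : ℝ} (s : ℝ) (hq : 0 ≤ q) (n : ℕ) :
    qHermite q s (n + 1) =
      X * qHermite q s n - C (s * q ^ ((n : ℤ) - 1)) * qDeriv q (qHermite q s n) := by
  cases n with
  | zero => simp [qHermite, qFact, qDoubleFact, qNum, qDeriv_one]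
  | succ n =>
    rw [qHermite_succ_succ s hq, Nat.cast_succ, add_sub_cancel_right, zpow_natCast]

end QHermite

theorem List.foldr_comp_map_range_apply {α : Type*} (e : ℤ → α → α) (u : ℕ → α)
    (hu : ∀ m : ℕ, u (m + 1) = e ((m : ℤ) - 1) (u m)) (n : ℕ) :
    ((List.range n).map fun i => e ((n : ℤ) - 1 - ((i : ℤ) + 1))).foldr (· ∘ ·) id (u 0) =
      u n := by
  -- `List.range n` is coerced to `List ℤ` as `do let a ← List.range n; pure (a : ℤ)`
  simp only [List.pure_def, List.bind_eq_flatMap, ← List.map_eq_flatMap, List.map_map,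
    Function.comp_def]
  induction n with
  | zero => rfl
  | succ n ih =>
    rw [List.range_succ_eq_map, List.map_cons, List.foldr_cons, List.map_map, hu, ← ih]
    congr 1
    · push_cast; ring_nf
    · refine congrArg (fun l => List.foldr _ id l (u 0)) (List.map_congr_left fun i _ => ?_)
      simp only [Function.comp_apply]
      push_cast; ring_nf

theorem qHermite_eq_comp_apply_one_general (q : ℝ) (hq0 : 0 < q) (s : ℝ) (n : ℕ) :
    qHermite q s n =
      (((List.range n).map fun i => fun g : Polynomial ℝ =>
            Polynomial.X * g - Polynomial.C (s * q ^ ((n : ℤ) - 1 - ((i : ℤ) + 1))) * qDeriv q g).foldr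
          (· ∘ ·) id) 1 := by
  have hH0 : qHermite q s 0 = 1 := by simp [qHermite, qFact, qDoubleFact]
  rw [← hH0]
  exact (List.foldr_comp_map_range_apply (fun c g => X * g - C (s * q ^ c) * qDeriv q g)
    (qHermite q s) (qHermite_succ s hq0.le) n).symm

/-- `H_n(x,s|q)` equals the composition `(M_x - s q^{n-2} D_q) ∘ ⋯ ∘ (M_x - s q^{-1} D_q)`
(the `j`-th factor from the left being `M_x - s q^{n-1-j} D_q`, `j = 1,…,n`)
applied to the constant polynomial `1`. -/
theorem qHermite_eq_comp_apply_one (q : ℝ) (hq0 : 0 < q) (hq1 : q < 1) (s : ℝ) (n : ℕ)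
    (hn : 1 ≤ n) :
    qHermite q s n =
      (((List.range n).map fun i => fun g : Polynomial ℝ =>
            Polynomial.X * g - Polynomial.C (s * q ^ ((n : ℤ) - 1 - ((i : ℤ) + 1))) * qDeriv q g).foldr
          (· ∘ ·) id) 1 :=
  qHermite_eq_comp_apply_one_general q hq0 s n
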